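/- arXiv:0910.2798 — 2 statements merged into one kernel-verified Lean document; each statement's English description precedes it below -/
import Mathlib

section
/- For every positive integer n, Σ_{d e-unitary divisor of n} μ^{(e)*}(d) = μ(n)², where μ is the Möbius function; that is, the sum equals 1 if n is squarefree and 0 otherwise. (Equivalently, μ^{(e)*} is the inverse of the constant function 1 with respect to the exponential unitary convolution, whose identity element is μ².) -/
open scoped Classical BigOperators

/-- `d` is a unitary divisor of `m`: `d ∣ m` and `gcd (d, m/d) = 1`. -/
def IsUnitaryDivisor (d m : ℕ) : Prop := d ∣ m ∧ Nat.gcd d (m / d) = 1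

/-- `ω m` is the number of distinct prime divisors of `m`. -/
def omega (m : ℕ) : ℕ := m.primeFactors.card

/-- `d` is an exponential unitary divisor of `n`: `d` has the same prime factors as `n`
and, at each such prime, the exponent of `d` is a unitary divisor of the exponent of `n`.
By convention `1` is the only e-unitary divisor of `1`. -/
def IsExpUnitaryDivisor (d n : ℕ) : Prop :=
  0 < d ∧ 0 < n ∧ d.primeFactors = n.primeFactors ∧
    ∀ p ∈ n.primeFactors, IsUnitaryDivisor (d.factorization p) (n.factorization p)

/-- `d` is an exponential divisor of `n`. -/
def IsExpDivisor (d n : ℕ) : Prop :=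
  0 < d ∧ 0 < n ∧ d.primeFactors = n.primeFactors ∧
    ∀ p ∈ n.primeFactors, d.factorization p ∣ n.factorization p

/-- the sum of the e-unitary divisors of `n` -/
noncomputable def sigmaEStar (n : ℕ) : ℕ :=
  ∑ d ∈ n.divisors.filter (fun d => IsExpUnitaryDivisor d n), d

/-- the number of the e-unitary divisors of `n` -/
noncomputable def tauEStar (n : ℕ) : ℕ :=
  (n.divisors.filter (fun d => IsExpUnitaryDivisor d n)).card

/-- the sum of the e-divisors of `n` -/
noncomputable def sigmaE (n : ℕ) : ℕ :=
  ∑ d ∈ n.divisors.filter (fun d => IsExpDivisor d n), d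

/-- the number of the e-divisors of `n` -/
noncomputable def tauE (n : ℕ) : ℕ :=
  (n.divisors.filter (fun d => IsExpDivisor d n)).card

/-- the number of unitary divisors of `m` -/
noncomputable def tauStar (m : ℕ) : ℕ :=
  (m.divisors.filter (fun d => IsUnitaryDivisor d m)).card

/-- the unitary analogue `φ*` of Euler's function: multiplicative with `φ*(p^a) = p^a - 1` -/
def phiStar (m : ℕ) : ℕ := ∏ p ∈ m.primeFactors, (p ^ m.factorization p - 1)

/-- the e-unitary Euler function `φ^{(e)*}` -/
def phiEStar (n : ℕ) : ℕ := ∏ p ∈ n.primeFactors, phiStar (n.factorization p)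

/-- the exponential Euler function `φ^{(e)}` -/
def phiE (n : ℕ) : ℕ := ∏ p ∈ n.primeFactors, Nat.totient (n.factorization p)

/-- the exponential unitary analogue of the Möbius function -/
def muEStar (n : ℕ) : ℤ := (-1) ^ (∑ p ∈ n.primeFactors, omega (n.factorization p))

/-!
An e-unitary divisor of `n = ∏ p ^ a_p` amounts to an independent choice, for each `p`, of a
unitary divisor `b_p` of the exponent `a_p`, and `μ^{(e)*}` factors over these choices; so the sum
is `∏_p ∑_{b ∣* a_p} (-1)^{ω(b)}`. The unitary divisors of `a` are the products
`∏_{q ∈ S} q ^ v_q(a)` over subsets `S` of the prime factors of `a`, so each inner sum is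
`∑_S (-1)^{|S|}`, which vanishes unless `a_p = 1`. The product is therefore `1` exactly when `n`
is squarefree.
-/

open Finset

namespace Nat

theorem factorization_prod_pow_apply {s : Finset ℕ} (hs : ∀ p ∈ s, p.Prime) (e : ℕ → ℕ)
    (q : ℕ) : (∏ p ∈ s, p ^ e p).factorization q = if q ∈ s then e q else 0 := by
  rw [factorization_prod fun p hp => pow_ne_zero _ (hs p hp).ne_zero, Finsupp.finsetSum_apply,
    sum_congr rfl fun p hp => by rw [(hs p hp).factorization_pow, Finsupp.single_apply]]
  simp

theorem primeFactors_prod_pow {s : Finset ℕ} (hs : ∀ p ∈ s, p.Prime) {e : ℕ → ℕ}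
    (he : ∀ p ∈ s, e p ≠ 0) : (∏ p ∈ s, p ^ e p).primeFactors = s := by
  ext q
  rw [← support_factorization, Finsupp.mem_support_iff, factorization_prod_pow_apply hs]
  by_cases hq : q ∈ s <;> simp [hq, he]

theorem factorization_ne_zero_of_mem_primeFactors {n p : ℕ} (hp : p ∈ n.primeFactors) :
    n.factorization p ≠ 0 := by
  rwa [← Finsupp.mem_support_iff, support_factorization]

theorem squarefree_iff_factorization_eq_one {n : ℕ} (hn : n ≠ 0) :
    Squarefree n ↔ ∀ p ∈ n.primeFactors, n.factorization p = 1 := by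
  rw [squarefree_iff_factorization_le_one hn]
  refine ⟨fun h p hp => (h p).antisymm
    (pos_of_ne_zero (factorization_ne_zero_of_mem_primeFactors hp)), fun h p => ?_⟩
  by_cases hp : p ∈ n.primeFactors
  · exact (h p hp).le
  · rw [← support_factorization, Finsupp.notMem_support_iff] at hp
    omega

end Nat

noncomputable def unitaryDivisors (a : ℕ) : Finset ℕ := a.divisors.filter (IsUnitaryDivisor · a)

noncomputable def expUnitaryDivisors (n : ℕ) : Finset ℕ :=
  n.divisors.filter (IsExpUnitaryDivisor · n)

section UnitaryDivisors

variable {a b : ℕ}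

theorem IsUnitaryDivisor.ne_zero (h : IsUnitaryDivisor b a) (ha : a ≠ 0) : b ≠ 0 :=
  ne_zero_of_dvd_ne_zero ha h.1

theorem mem_unitaryDivisors (ha : a ≠ 0) : b ∈ unitaryDivisors a ↔ IsUnitaryDivisor b a :=
  ⟨fun h => (mem_filter.mp h).2, fun h => mem_filter.mpr ⟨Nat.mem_divisors.mpr ⟨h.1, ha⟩, h⟩⟩

theorem IsUnitaryDivisor.factorization_eq (h : IsUnitaryDivisor b a) {q : ℕ}
    (hq : q ∈ b.primeFactors) : b.factorization q = a.factorization q := by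
  obtain ⟨hdvd, hcop⟩ := h
  conv_rhs => rw [← Nat.mul_div_cancel' hdvd]
  exact (Nat.factorization_eq_of_coprime_left hcop
    (Nat.mem_primeFactors_iff_mem_primeFactorsList.mp hq)).symm

theorem isUnitaryDivisor_prod_pow_factorization (ha : a ≠ 0) {S : Finset ℕ}
    (hS : S ⊆ a.primeFactors) : IsUnitaryDivisor (∏ p ∈ S, p ^ a.factorization p) a := by
  have hprime : ∀ p ∈ a.primeFactors, p.Prime := fun p => Nat.prime_of_mem_primeFactors
  have hsplit : (∏ p ∈ S, p ^ a.factorization p) * ∏ p ∈ a.primeFactors \ S, p ^ a.factorization p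
      = a := by
    rw [mul_comm, prod_sdiff hS]; exact Nat.prod_factorization_pow_eq_self ha
  have hpos : 0 < ∏ p ∈ S, p ^ a.factorization p :=
    prod_pos fun p hp => pow_pos (hprime p (hS hp)).pos _
  refine ⟨Dvd.intro _ hsplit, ?_⟩
  rw [Nat.div_eq_of_eq_mul_right hpos hsplit.symm]
  refine Nat.Coprime.prod_left fun p hp => Nat.Coprime.prod_right fun q hq => ?_
  exact Nat.coprime_pow_primes _ _ (hprime p (hS hp)) (hprime q (sdiff_subset hq))
    fun hpq => (mem_sdiff.mp hq).2 (hpq ▸ hp)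

theorem sum_unitaryDivisors_neg_one_pow_omega (ha : a ≠ 0) :
    ∑ b ∈ unitaryDivisors a, (-1 : ℤ) ^ omega b = if a = 1 then 1 else 0 := by
  have hprime : ∀ S ∈ a.primeFactors.powerset, ∀ p ∈ S, p.Prime := fun S hS p hp =>
    Nat.prime_of_mem_primeFactors (mem_powerset.mp hS hp)
  have hexp : ∀ S ∈ a.primeFactors.powerset, ∀ p ∈ S, a.factorization p ≠ 0 := fun S hS p hp =>
    Nat.factorization_ne_zero_of_mem_primeFactors (mem_powerset.mp hS hp)
  have hsum : ∑ b ∈ unitaryDivisors a, (-1 : ℤ) ^ omega b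
      = ∑ S ∈ a.primeFactors.powerset, (-1 : ℤ) ^ S.card := by
    refine sum_nbij' (·.primeFactors) (fun S => ∏ p ∈ S, p ^ a.factorization p) ?_ ?_ ?_ ?_ ?_
    · intro b hb
      exact mem_powerset.mpr (Nat.primeFactors_mono ((mem_unitaryDivisors ha).mp hb).1 ha)
    · intro S hS
      exact (mem_unitaryDivisors ha).mpr
        (isUnitaryDivisor_prod_pow_factorization ha (mem_powerset.mp hS))
    · intro b hb
      have hu := (mem_unitaryDivisors ha).mp hb
      calc ∏ p ∈ b.primeFactors, p ^ a.factorization p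
          = ∏ p ∈ b.primeFactors, p ^ b.factorization p :=
            prod_congr rfl fun p hp => by rw [hu.factorization_eq hp]
        _ = b := Nat.prod_factorization_pow_eq_self (hu.ne_zero ha)
    · intro S hS
      exact Nat.primeFactors_prod_pow (hprime S hS) (hexp S hS)
    · intro b _; rfl
  rw [hsum, sum_powerset_neg_one_pow_card]
  simp [Nat.primeFactors_eq_empty, ha]

end UnitaryDivisors

section ExpUnitaryDivisors

variable {n : ℕ}

theorem muEStar_eq_prod (d : ℕ) :
    muEStar d = ∏ p ∈ d.primeFactors, (-1 : ℤ) ^ omega (d.factorization p) :=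
  (prod_pow_eq_pow_sum _ _ _).symm

theorem IsExpUnitaryDivisor.prod_pow_factorization {d : ℕ} (h : IsExpUnitaryDivisor d n) :
    ∏ p ∈ n.primeFactors, p ^ d.factorization p = d := by
  rw [← h.2.2.1]
  exact Nat.prod_factorization_pow_eq_self h.1.ne'

theorem IsExpUnitaryDivisor.dvd {d : ℕ} (h : IsExpUnitaryDivisor d n) : d ∣ n := by
  obtain ⟨hd, hn, hpf, hu⟩ := h
  rw [← Nat.factorization_le_iff_dvd hd.ne' hn.ne']
  intro p
  by_cases hp : p ∈ n.primeFactors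
  · exact Nat.le_of_dvd (Nat.pos_of_ne_zero (Nat.factorization_ne_zero_of_mem_primeFactors hp))
      (hu p hp).1
  · rw [← hpf, ← Nat.support_factorization, Finsupp.notMem_support_iff] at hp
    simp [hp]

theorem mem_expUnitaryDivisors {d : ℕ} : d ∈ expUnitaryDivisors n ↔ IsExpUnitaryDivisor d n :=
  ⟨fun h => (mem_filter.mp h).2,
    fun h => mem_filter.mpr ⟨Nat.mem_divisors.mpr ⟨h.dvd, h.2.1.ne'⟩, h⟩⟩

theorem isExpUnitaryDivisor_prod_pow (hn : n ≠ 0) {e : ℕ → ℕ}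
    (he : ∀ p ∈ n.primeFactors, IsUnitaryDivisor (e p) (n.factorization p)) :
    IsExpUnitaryDivisor (∏ p ∈ n.primeFactors, p ^ e p) n := by
  have hprime : ∀ p ∈ n.primeFactors, p.Prime := fun p => Nat.prime_of_mem_primeFactors
  have hexp : ∀ p ∈ n.primeFactors, e p ≠ 0 := fun p hp =>
    (he p hp).ne_zero (Nat.factorization_ne_zero_of_mem_primeFactors hp)
  refine ⟨prod_pos fun p hp => pow_pos (hprime p hp).pos _, Nat.pos_of_ne_zero hn,
    Nat.primeFactors_prod_pow hprime hexp, fun p hp => ?_⟩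
  rw [Nat.factorization_prod_pow_apply hprime, if_pos hp]
  exact he p hp

theorem sum_expUnitaryDivisors_prod {R : Type*} [CommSemiring R] (hn : n ≠ 0) (f : ℕ → ℕ → R) :
    ∑ d ∈ expUnitaryDivisors n, ∏ p ∈ n.primeFactors, f p (d.factorization p)
      = ∏ p ∈ n.primeFactors, ∑ b ∈ unitaryDivisors (n.factorization p), f p b := by
  rw [prod_sum]
  let extend (g : ∀ p ∈ n.primeFactors, ℕ) (p : ℕ) : ℕ :=
    if h : p ∈ n.primeFactors then g p h else 0
  refine sum_nbij' (fun d p _ => d.factorization p)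
    (fun g => ∏ p ∈ n.primeFactors, p ^ extend g p) ?_ ?_ ?_ ?_ ?_
  · intro d hd
    refine mem_pi.mpr fun p hp => (mem_unitaryDivisors
      (Nat.factorization_ne_zero_of_mem_primeFactors hp)).mpr
        ((mem_expUnitaryDivisors.mp hd).2.2.2 p hp)
  · intro g hg
    refine mem_expUnitaryDivisors.mpr (isExpUnitaryDivisor_prod_pow hn fun p hp => ?_)
    simp only [extend, dif_pos hp]
    exact (mem_unitaryDivisors (Nat.factorization_ne_zero_of_mem_primeFactors hp)).mp
      (mem_pi.mp hg p hp)
  · intro d hd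
    refine .trans (prod_congr rfl fun p hp => ?_)
      (mem_expUnitaryDivisors.mp hd).prod_pow_factorization
    simp only [extend, dif_pos hp]
  · intro g _
    funext p hp
    rw [Nat.factorization_prod_pow_apply (fun q => Nat.prime_of_mem_primeFactors), if_pos hp]
    simp only [extend, dif_pos hp]
  · intro d _
    rw [prod_attach n.primeFactors fun p => f p (d.factorization p)]

end ExpUnitaryDivisors

/-- `Σ_{d ∣_{e*} n} μ^{(e)*}(d) = μ(n)²`: the sum of `μ^{(e)*}` over the e-unitary
divisors of `n` is `1` if `n` is squarefree and `0` otherwise. -/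
theorem muEStar_sum_over_exp_unitary_divisors :
    ∀ n : ℕ, 0 < n →
      (∑ d ∈ n.divisors.filter (fun d => IsExpUnitaryDivisor d n), muEStar d) =
        if Squarefree n then 1 else 0 := by
  intro n hn
  have hmu : ∀ d ∈ expUnitaryDivisors n,
      muEStar d = ∏ p ∈ n.primeFactors, (-1 : ℤ) ^ omega (d.factorization p) := fun d hd => by
    rw [muEStar_eq_prod, (mem_expUnitaryDivisors.mp hd).2.2.1]
  calc ∑ d ∈ expUnitaryDivisors n, muEStar d
      = ∑ d ∈ expUnitaryDivisors n, ∏ p ∈ n.primeFactors, (-1 : ℤ) ^ omega (d.factorization p) :=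
        sum_congr rfl hmu
    _ = ∏ p ∈ n.primeFactors, ∑ b ∈ unitaryDivisors (n.factorization p), (-1 : ℤ) ^ omega b :=
        sum_expUnitaryDivisors_prod hn.ne' fun _ b => (-1 : ℤ) ^ omega b
    _ = ∏ p ∈ n.primeFactors, if n.factorization p = 1 then 1 else 0 :=
        prod_congr rfl fun p hp => sum_unitaryDivisors_neg_one_pow_omega
          (Nat.factorization_ne_zero_of_mem_primeFactors hp)
    _ = if Squarefree n then 1 else 0 := by
        simp only [prod_boole, Nat.squarefree_iff_factorization_eq_one hn.ne']
end

section
/- The limsup as n → ∞ of (log τ^{(e)*}(n) · log log n) / log n equals (1/2) log 2. -/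
open scoped Classical BigOperators

/-!
Write `a_p` for the exponent of `p` in `n`. The e-unitary divisors of `n` are determined by
their exponents, which are divisors of the `a_p`, and `d(a)² ≤ 2^a`; hence
`log τ^{(e)*}(n) ≤ Σ_{p ∣ n} log d(a_p)` with `log d(a) ≤ (log 2 / 2) a`. For the primes
`p > z = (log n)^{1-δ}` this gives at most `(log 2 / 2) Σ a_p log p / log z
= (log 2 / 2) log n / ((1 - δ) log log n)`; the at most `z` primes `p ≤ z` contribute
`O(log log n)` each, which is negligible.

Conversely, if `n = (N#)²` then every exponent is `2`, and both `1` and `2` are unitary divisors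
of `2`, so `τ^{(e)*}(n) ≥ 2^{π(N)}` while `log n = 2θ(N)`. Chebyshev's bounds
`θ(N) ≤ π(N) log N` and `N ≤ 2θ(N)` then give the ratio at least `log 2 / 2` along these `n`.
-/

open Filter Real Finset Topology Chebyshev

lemma limsup_eq_of_frequently_le_of_eventually_le {ι : Type*} {l : Filter ι} {f : ι → ℝ}
    {c : ℝ} (hlow : ∃ᶠ i in l, c ≤ f i) (hup : ∀ ε > 0, ∀ᶠ i in l, f i ≤ c + ε) :
    limsup f l = c :=
  le_antisymm
    (le_of_forall_pos_le_add fun ε hε =>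
      limsup_le_of_le (IsCoboundedUnder.of_frequently_ge hlow) (hup ε hε))
    (le_limsup_of_frequently_le hlow (isBoundedUnder_of_eventually_le (hup 1 one_pos)))

lemma tauEStar_le_prod_card_divisors (n : ℕ) :
    tauEStar n ≤ ∏ p ∈ n.primeFactors, (n.factorization p).divisors.card := by
  rw [tauEStar, ← card_pi]
  refine card_le_card_of_injOn (fun d p _ => d.factorization p) (fun d hd => ?_) ?_
  · obtain ⟨-, -, -, hexp⟩ := (mem_filter.mp hd).2
    rw [mem_coe, Finset.mem_pi]
    exact fun p hp => Nat.mem_divisors.mpr ⟨(hexp p hp).1, Finsupp.mem_support_iff.mp hp⟩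
  · intro d₁ h₁ d₂ h₂ h
    obtain ⟨hd₁, -, hpf₁, -⟩ := (mem_filter.mp h₁).2
    obtain ⟨hd₂, -, hpf₂, -⟩ := (mem_filter.mp h₂).2
    refine Nat.eq_of_factorization_eq hd₁.ne' hd₂.ne' fun p => ?_
    by_cases hp : p ∈ n.primeFactors
    · exact congrFun (congrFun h p) hp
    · have hzero {d : ℕ} (hd : d.primeFactors = n.primeFactors) : d.factorization p = 0 :=
        Finsupp.notMem_support_iff.mp (by rwa [Nat.support_factorization, hd])
      rw [hzero hpf₁, hzero hpf₂]

lemma sq_le_two_pow_of_four_le {a : ℕ} (ha : 4 ≤ a) : a ^ 2 ≤ 2 ^ a := by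
  induction a, ha using Nat.le_induction with
  | base => norm_num
  | succ a ha ih => rw [pow_succ 2]; nlinarith

lemma card_divisors_sq_le_two_pow (a : ℕ) : a.divisors.card ^ 2 ≤ 2 ^ a := by
  rcases le_or_gt 4 a with ha | ha
  · exact (Nat.pow_le_pow_left a.card_divisors_le_self 2).trans (sq_le_two_pow_of_four_le ha)
  · interval_cases a <;> decide

lemma log_card_divisors_le (a : ℕ) : log a.divisors.card ≤ log 2 / 2 * a := by
  rcases Nat.eq_zero_or_pos a.divisors.card with h | h
  · rw [h, Nat.cast_zero, log_zero]; positivity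
  · have := log_le_log (by positivity)
      (mod_cast card_divisors_sq_le_two_pow a : (a.divisors.card : ℝ) ^ 2 ≤ 2 ^ a)
    rw [log_pow, log_pow] at this
    push_cast at this
    linarith

lemma log_tauEStar_le_sum (n : ℕ) :
    log (tauEStar n) ≤ ∑ p ∈ n.primeFactors, log (n.factorization p).divisors.card := by
  have hpos : ∀ p ∈ n.primeFactors, 0 < (n.factorization p).divisors.card := fun p hp =>
    card_pos.mpr (Nat.nonempty_divisors.mpr (Finsupp.mem_support_iff.mp hp))
  rw [← log_prod fun p hp => mod_cast (hpos p hp).ne']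
  rcases Nat.eq_zero_or_pos (tauEStar n) with h | h
  · rw [h, Nat.cast_zero, log_zero]
    exact log_nonneg (mod_cast prod_pos hpos)
  · exact log_le_log (mod_cast h) (mod_cast tauEStar_le_prod_card_divisors n)

lemma factorization_mul_log_le (n : ℕ) {p : ℕ} (hp : p.Prime) :
    n.factorization p * log p ≤ log n := by
  rcases eq_or_ne n 0 with rfl | hn
  · simp
  rw [← log_pow]
  exact log_le_log (by have := hp.pos; positivity) (mod_cast Nat.ordProj_le p hn)

lemma factorization_le_two_mul_log (n : ℕ) {p : ℕ} (hp : p.Prime) :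
    (n.factorization p : ℝ) ≤ 2 * log n := by
  have h2 : 1 / 2 < log p :=
    (log_two_gt_d9.trans' (by norm_num)).trans_le (log_le_log two_pos (mod_cast hp.two_le))
  nlinarith [factorization_mul_log_le n hp, (n.factorization p).cast_nonneg (α := ℝ)]

lemma sum_factorization_mul_log_le (n : ℕ) {s : Finset ℕ} (hs : s ⊆ n.primeFactors) :
    ∑ p ∈ s, n.factorization p * log p ≤ log n := by
  rw [log_nat_eq_sum_factorization, Finsupp.sum]
  exact sum_le_sum_of_subset_of_nonneg hs fun p _ _ => by positivity

lemma log_two_mul_log_nonneg (n : ℕ) : 0 ≤ log (2 * log n) := by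
  rcases lt_or_ge n 2 with hn | hn
  · interval_cases n <;> simp
  · apply log_nonneg
    have := log_le_log two_pos (mod_cast hn : (2 : ℝ) ≤ n)
    linarith [log_two_gt_d9]

lemma sum_log_card_divisors_le_of_le (n : ℕ) {z : ℝ} (hz : 0 ≤ z) :
    ∑ p ∈ n.primeFactors.filter (fun p : ℕ => (p : ℝ) ≤ z),
      log (n.factorization p).divisors.card ≤ z * log (2 * log n) := by
  set s := n.primeFactors.filter (fun p : ℕ => (p : ℝ) ≤ z)
  have hterm : ∀ p ∈ s, log (n.factorization p).divisors.card ≤ log (2 * log n) := by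
    intro p hp
    have hp := (mem_filter.mp hp).1
    have ha : 0 < n.factorization p := Nat.pos_of_ne_zero (Finsupp.mem_support_iff.mp hp)
    calc log (n.factorization p).divisors.card ≤ log (n.factorization p) :=
          log_le_log (mod_cast card_pos.mpr (Nat.nonempty_divisors.mpr ha.ne'))
            (mod_cast Nat.card_divisors_le_self _)
      _ ≤ log (2 * log n) :=
          log_le_log (mod_cast ha)
            (factorization_le_two_mul_log n (Nat.prime_of_mem_primeFactors hp))
  have hcard : (s.card : ℝ) ≤ z := by
    have hsub : s ⊆ Icc 1 ⌊z⌋₊ := fun p hp => by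
      rw [mem_filter] at hp
      exact mem_Icc.mpr ⟨(Nat.prime_of_mem_primeFactors hp.1).one_le, Nat.le_floor hp.2⟩
    calc (s.card : ℝ) ≤ (Icc 1 ⌊z⌋₊).card := mod_cast card_le_card hsub
      _ ≤ z := by simpa using Nat.floor_le hz
  calc _ ≤ s.card • log (2 * log n) := sum_le_card_nsmul _ _ _ hterm
    _ ≤ z * log (2 * log n) := by
        rw [nsmul_eq_mul]
        exact mul_le_mul_of_nonneg_right hcard (log_two_mul_log_nonneg n)

lemma sum_log_card_divisors_le_of_lt (n : ℕ) {z : ℝ} (hz : 1 < z) :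
    ∑ p ∈ n.primeFactors.filter (fun p : ℕ => z < (p : ℝ)),
      log (n.factorization p).divisors.card ≤ log 2 / 2 * (log n / log z) := by
  set s := n.primeFactors.filter (fun p : ℕ => z < (p : ℝ))
  have hlogz : 0 < log z := log_pos hz
  calc _ ≤ ∑ p ∈ s, log 2 / 2 / log z * (n.factorization p * log p) := by
        refine sum_le_sum fun p hp => ?_
        have hzp : log z ≤ log p := log_le_log (by linarith) (mem_filter.mp hp).2.le
        calc log (n.factorization p).divisors.card ≤ log 2 / 2 * n.factorization p :=
              log_card_divisors_le _
          _ ≤ log 2 / 2 * n.factorization p * (log p / log z) :=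
              le_mul_of_one_le_right (by positivity) ((one_le_div hlogz).mpr hzp)
          _ = log 2 / 2 / log z * (n.factorization p * log p) := by ring
    _ = log 2 / 2 / log z * ∑ p ∈ s, n.factorization p * log p := by rw [mul_sum]
    _ ≤ log 2 / 2 / log z * log n := by
        gcongr
        exact sum_factorization_mul_log_le n (filter_subset _ _)
    _ = log 2 / 2 * (log n / log z) := by ring

lemma log_tauEStar_le (n : ℕ) {z : ℝ} (hz : 1 < z) :
    log (tauEStar n) ≤ log 2 / 2 * (log n / log z) + z * log (2 * log n) := by
  have := sum_filter_add_sum_filter_not n.primeFactors (fun p : ℕ => (p : ℝ) ≤ z)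
    fun p => log (n.factorization p).divisors.card
  simp only [not_le] at this
  linarith [log_tauEStar_le_sum n, sum_log_card_divisors_le_of_le n (z := z) (by linarith),
    sum_log_card_divisors_le_of_lt n hz]

lemma log_tauEStar_mul_log_log_div_log_le (n : ℕ) {δ : ℝ} (hδ : δ < 1)
    (hn : 1 < log n) :
    log (tauEStar n) * log (log n) / log n ≤
      log 2 / 2 / (1 - δ) + log (2 * log n) * log (log n) / log n ^ δ := by
  set L := log n
  have hL : 0 < L := one_pos.trans hn
  have hlogL : 0 < log L := log_pos hn
  have hz := log_tauEStar_le n (one_lt_rpow hn (sub_pos.mpr hδ))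
  rw [log_rpow hL, rpow_sub hL, rpow_one] at hz
  rw [div_le_iff₀ hL]
  calc log (tauEStar n) * log L
      ≤ (log 2 / 2 * (L / ((1 - δ) * log L)) + L / L ^ δ * log (2 * L)) * log L := by gcongr
    _ = (log 2 / 2 / (1 - δ) + log (2 * L) * log L / L ^ δ) * L := by
        field_simp

lemma tendsto_log_two_mul_mul_log_div_rpow {δ : ℝ} (hδ : 0 < δ) :
    Tendsto (fun x => log (2 * x) * log x / x ^ δ) atTop (𝓝 0) := by
  have hsq : Tendsto (fun x => 2 * (log x ^ (2 : ℝ) / x ^ δ)) atTop (𝓝 0) := by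
    simpa using ((isLittleO_log_rpow_rpow_atTop 2 hδ).tendsto_div_nhds_zero).const_mul 2
  refine squeeze_zero' ?_ ?_ hsq
  · filter_upwards [eventually_ge_atTop 1] with x hx
    have := log_nonneg hx
    have : 0 ≤ log (2 * x) := log_nonneg (by linarith)
    positivity
  · filter_upwards [eventually_ge_atTop 2] with x hx
    have hlog2x : log (2 * x) ≤ 2 * log x := by
      rw [← log_rpow (by linarith), rpow_two]
      exact log_le_log (by linarith) (by nlinarith)
    rw [rpow_two, mul_div_assoc', div_le_div_iff_of_pos_right (by positivity)]
    nlinarith [log_nonneg (by linarith : (1 : ℝ) ≤ x)]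

lemma eventually_log_tauEStar_mul_log_log_div_log_le {ε : ℝ} (hε : 0 < ε) :
    ∀ᶠ n : ℕ in atTop, log (tauEStar n) * log (log n) / log n ≤ log 2 / 2 + ε := by
  have hlog2 : 0 < log 2 := log_pos one_lt_two
  have hmain : log 2 / 2 / (1 - ε / (log 2 + ε)) = log 2 / 2 + ε / 2 := by
    rw [one_sub_div (by positivity), add_sub_cancel_right]
    field_simp
  set δ := ε / (log 2 + ε)
  have hδ₀ : 0 < δ := by positivity
  have hδ₁ : δ < 1 := (div_lt_one (by positivity)).mpr (by linarith)
  have hlog : Tendsto (fun n : ℕ => log n) atTop atTop :=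
    tendsto_log_atTop.comp tendsto_natCast_atTop_atTop
  filter_upwards [hlog.eventually_gt_atTop 1,
    hlog.eventually ((tendsto_log_two_mul_mul_log_div_rpow hδ₀).eventually_le_const
      (half_pos hε))] with n hn herr
  linarith [log_tauEStar_mul_log_log_div_log_le n hδ₁ hn]

lemma card_divisors_le_tauEStar_sq {m : ℕ} (hm : Squarefree m) :
    m.divisors.card ≤ tauEStar (m ^ 2) := by
  have hm0 : m ≠ 0 := hm.ne_zero
  have hm2 : m ^ 2 ≠ 0 := pow_ne_zero 2 hm0
  have hpf : (m ^ 2).primeFactors = m.primeFactors := Nat.primeFactors_pow m two_ne_zero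
  rw [tauEStar]
  refine card_le_card_of_injOn (m * ·) (fun d hd => ?_)
    fun d₁ _ d₂ _ h => mul_left_cancel₀ hm0 h
  obtain ⟨hdm, -⟩ := Nat.mem_divisors.mp hd
  have hd0 : d ≠ 0 := ne_zero_of_dvd_ne_zero hm0 hdm
  have hmd0 : m * d ≠ 0 := mul_ne_zero hm0 hd0
  simp only [coe_filter, Set.mem_ofPred_eq, Nat.mem_divisors]
  refine ⟨⟨by rw [sq]; exact mul_dvd_mul_left m hdm, hm2⟩, Nat.pos_of_ne_zero hmd0,
    Nat.pos_of_ne_zero hm2, ?_, fun p hp => ?_⟩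
  · rw [Nat.primeFactors_mul hm0 hd0, hpf, union_eq_left]
    exact Nat.primeFactors_mono hdm hm0
  · rw [hpf] at hp
    have hp' := Nat.prime_of_mem_primeFactors hp
    have hmp : m.factorization p = 1 :=
      Nat.factorization_eq_one_of_squarefree hm hp' (Nat.dvd_of_mem_primeFactors hp)
    have hdp : d.factorization p ≤ 1 :=
      hmp ▸ (Nat.factorization_le_iff_dvd hd0 hm0).mpr hdm p
    rw [Nat.factorization_mul hm0 hd0, Nat.factorization_pow, Finsupp.add_apply,
      Finsupp.smul_apply, hmp, smul_eq_mul]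
    interval_cases d.factorization p <;> norm_num [IsUnitaryDivisor]

lemma card_divisors_of_squarefree {m : ℕ} (hm : Squarefree m) :
    m.divisors.card = 2 ^ m.primeFactors.card := by
  rw [Nat.card_divisors hm.ne_zero, ← prod_const]
  exact prod_congr rfl fun p hp => by
    rw [Nat.factorization_eq_one_of_squarefree hm (Nat.prime_of_mem_primeFactors hp)
      (Nat.dvd_of_mem_primeFactors hp)]

lemma log_two_div_two_le_of_primorial_sq {N : ℕ} (hN : 2 ≤ N) (hθ : (N : ℝ) ≤ 2 * θ N) :
    log 2 / 2 ≤ log (tauEStar (primorial N ^ 2)) * log (log ↑(primorial N ^ 2)) /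
      log ↑(primorial N ^ 2) := by
  have hθpos : 0 < θ N := theta_pos (mod_cast hN)
  have hlogn : log ↑(primorial N ^ 2) = 2 * θ N := by
    rw [Nat.cast_pow, log_pow, theta_eq_log_primorial, Nat.floor_natCast, Nat.cast_two]
  have hπ : (Nat.primeCounting N : ℝ) * log 2 ≤ log (tauEStar (primorial N ^ 2)) := by
    have h := card_divisors_le_tauEStar_sq (squarefree_primorial N)
    rw [card_divisors_of_squarefree (squarefree_primorial N), primeFactors_primorial,
      Nat.primesLE_card_eq_primeCounting] at h
    rw [← log_pow]
    exact log_le_log (by positivity) (mod_cast h)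
  have hlogN : log N ≤ log (2 * θ N) := log_le_log (by positivity) hθ
  rw [hlogn, le_div_iff₀ (by positivity)]
  calc log 2 / 2 * (2 * θ N) ≤ Nat.primeCounting N * log N * log 2 := by
        nlinarith [theta_le_pi_mul_log N, log_pos one_lt_two]
    _ ≤ log (tauEStar (primorial N ^ 2)) * log (2 * θ N) := by
        rw [mul_right_comm]
        exact mul_le_mul hπ hlogN (log_nonneg (mod_cast one_le_two.trans hN)) (by positivity)

lemma eventually_four_mul_sqrt_mul_log_le {c : ℝ} (hc : 0 < c) :
    ∀ᶠ x : ℝ in atTop, 4 * √x * log x ≤ c * x := by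
  filter_upwards [(isLittleO_log_rpow_atTop one_half_pos).bound (by positivity : 0 < c / 4),
    eventually_ge_atTop 1] with x hx hx1
  rw [norm_of_nonneg (log_nonneg hx1), norm_of_nonneg (by positivity), ← sqrt_eq_rpow] at hx
  calc 4 * √x * log x ≤ 4 * √x * (c / 4 * √x) := by gcongr
    _ = c * (√x * √x) := by ring
    _ = c * x := by rw [mul_self_sqrt (by linarith)]

lemma eventually_le_two_mul_theta : ∀ᶠ N : ℕ in atTop, (N : ℝ) ≤ 2 * θ N := by
  have hlog2 : 1 / 2 < log 2 := log_two_gt_d9.trans' (by norm_num)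
  filter_upwards [tendsto_natCast_atTop_atTop.eventually
      (eventually_four_mul_sqrt_mul_log_le (sub_pos.mpr hlog2)),
    eventually_ge_atTop 2] with N hN hN2
  have hN2' : (2 : ℝ) ≤ N := mod_cast hN2
  have hlogN : 0 ≤ log N := log_nonneg (by linarith)
  have hsucc : log (N + 1) ≤ 2 * √N * log N := by
    calc log (N + 1) ≤ log ((N : ℝ) ^ 2) := log_le_log (by positivity) (by nlinarith)
      _ = 2 * 1 * log N := by rw [log_pow]; push_cast; ring
      _ ≤ 2 * √N * log N := by
          gcongr
          exact one_le_sqrt.mpr (by linarith)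
  linarith [theta_ge N]

lemma frequently_log_two_div_two_le :
    ∃ᶠ n : ℕ in atTop, log 2 / 2 ≤ log (tauEStar n) * log (log n) / log n := by
  have htend : Tendsto (fun N => primorial N ^ 2) atTop atTop :=
    tendsto_atTop_mono (fun N => le_primorial_self.trans (Nat.le_self_pow two_ne_zero _))
      tendsto_id
  refine htend.frequently (Eventually.frequently ?_)
  filter_upwards [eventually_le_two_mul_theta, eventually_ge_atTop 2] with N hθ hN
  exact log_two_div_two_le_of_primorial_sq hN hθ

/-- The maximal order of `τ^{(e)*}`:
`limsup (log τ^{(e)*}(n) · log log n) / log n = (1/2) log 2`. -/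
theorem tauEStar_limsup :
    Filter.limsup
      (fun n : ℕ => Real.log (tauEStar n) * Real.log (Real.log n) / Real.log n)
      Filter.atTop = 1 / 2 * Real.log 2 := by
  rw [one_div_mul_eq_div]
  exact limsup_eq_of_frequently_le_of_eventually_le frequently_log_two_div_two_le
    fun ε hε => eventually_log_tauEStar_mul_log_log_div_log_le hε
end
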